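/- arXiv:2308.12208 — 7 statements merged into one kernel-verified Lean document; each statement's English description precedes it below -/
import Mathlib

section
/- Let V be a vector space and S, T commuting surjective linear operators on V. Then S restricted to ker T is surjective onto ker T if and only if ker(S∘T) ⊆ ker S + ker T. -/
/-- Let V be a vector space and S, T commuting surjective linear operators on V.
Then S restricted to ker T is surjective onto ker T if and only if
ker(S∘T) ⊆ ker S + ker T. -/
theorem stmt0 {K : Type*} [Field K] {V : Type*} [AddCommGroup V] [Module K V]
    (S T : V →ₗ[K] V) (hcomm : S ∘ₗ T = T ∘ₗ S)
    (hS : Function.Surjective S) (hT : Function.Surjective T) :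
    (∀ y ∈ LinearMap.ker T, ∃ x ∈ LinearMap.ker T, S x = y) ↔
      LinearMap.ker (S ∘ₗ T) ≤ LinearMap.ker S ⊔ LinearMap.ker T := by
  constructor
  · intro h v hv
    have hSv : S v ∈ LinearMap.ker T := by
      simp only [LinearMap.mem_ker] at hv ⊢
      have := congrArg (fun f => f v) hcomm
      simpa [LinearMap.comp_apply, hv] using this.symm
    obtain ⟨x, hx, hSx⟩ := h (S v) hSv
    have : v - x ∈ LinearMap.ker S := by
      simp [LinearMap.mem_ker, hSx]
    have : v = (v - x) + x := by abel
    rw [this]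
    exact Submodule.add_mem_sup ‹v - x ∈ _› hx
  · intro h y hy
    obtain ⟨v, hv⟩ := hS y
    have hv' : v ∈ LinearMap.ker (S ∘ₗ T) := by
      rw [hcomm]
      simp only [LinearMap.mem_ker, LinearMap.comp_apply, hv]
      exact hy
    obtain ⟨a, ha, b, hb, hab⟩ := Submodule.mem_sup.mp (h hv')
    refine ⟨b, hb, ?_⟩
    have : S b = S v - S a := by
      rw [← hab]; simp
    rw [this, LinearMap.mem_ker.mp ha, hv, sub_zero]
end

section
/- Let V be a vector space and S, T commuting surjective linear operators on V with ker(S∘T) ⊆ ker S + ker T. Then for any v, w ∈ V with S v = T w there exists x ∈ V such that v = T x and w = S x. -/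
/-- If S, T are commuting surjective linear operators with
ker(S∘T) ⊆ ker S + ker T, then any pair (v,w) with S v = T w is a joint pair. -/
theorem stmt1 {K : Type*} [Field K] {V : Type*} [AddCommGroup V] [Module K V]
    (S T : V →ₗ[K] V) (hcomm : S ∘ₗ T = T ∘ₗ S)
    (hS : Function.Surjective S) (hT : Function.Surjective T)
    (hker : LinearMap.ker (S ∘ₗ T) ≤ LinearMap.ker S ⊔ LinearMap.ker T)
    (v w : V) (h : S v = T w) :
    ∃ x : V, v = T x ∧ w = S x := by
  obtain ⟨p, hp⟩ := hT v
  obtain ⟨q, hq⟩ := hS w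
  have hmem : p - q ∈ LinearMap.ker (S ∘ₗ T) := by
    have h1 : (S ∘ₗ T) q = (T ∘ₗ S) q := by rw [hcomm]
    simp only [LinearMap.mem_ker, LinearMap.comp_apply, map_sub]
    have : S (T q) = T (S q) := congrArg (·) h1
    simp only [LinearMap.comp_apply] at h1
    rw [hp, hq] at *
    rw [h, h1, hq]
    simp
  obtain ⟨a, ha, b, hb, hab⟩ := Submodule.mem_sup.mp (hker hmem)
  refine ⟨q + a, ?_, ?_⟩
  · have : T (p - q) = T a + T b := by rw [← hab]; simp
    rw [LinearMap.mem_ker] at hb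
    rw [map_sub, hp, hb, add_zero] at this
    rw [map_add, ← this]
    abel
  · rw [LinearMap.mem_ker] at ha
    rw [map_add, ha, add_zero, hq]
end

section
/- Let V be a vector space and S, T commuting surjective linear operators on V. If every pair (v,w) with S v = T w can be written as (T x, S x) for some x ∈ V, then ker(S∘T) ⊆ ker S + ker T. -/
/-- If every pair (v,w) with S v = T w can be written as (T x, S x), then
ker(S∘T) ⊆ ker S + ker T. -/
theorem stmt2 {K : Type*} [Field K] {V : Type*} [AddCommGroup V] [Module K V]
    (S T : V →ₗ[K] V) (hcomm : S ∘ₗ T = T ∘ₗ S)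
    (hS : Function.Surjective S) (hT : Function.Surjective T)
    (hjoint : ∀ v w : V, S v = T w → ∃ x : V, v = T x ∧ w = S x) :
    LinearMap.ker (S ∘ₗ T) ≤ LinearMap.ker S ⊔ LinearMap.ker T := by
  intro u hu
  have h : S (T u) = T 0 := by simpa using hu
  obtain ⟨x, hx1, hx2⟩ := hjoint (T u) 0 h
  have hx : x ∈ LinearMap.ker S := by simp [LinearMap.mem_ker, ← hx2]
  have hux : u - x ∈ LinearMap.ker T := by
    simp [LinearMap.mem_ker, map_sub, ← hx1]
  have : u = x + (u - x) := by abel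
  rw [this]
  exact Submodule.add_mem_sup hx hux
end

section
/- Suppose α is an irrational real number that is not a Liouville number. Then there exist a constant C > 0 and a positive integer N such that for all real x, |sin x|/|x| + |sin(α x)|/|x| ≥ C·(1+|x|)^(−N) (interpreting the left side by continuity at x = 0, i.e. as 1 + |α| at x = 0). -/
/-!
Let `m` and `n` be the integers nearest to `x / π` and `α x / π`. Since
`|sin y| ≥ (2/π)·dist(y, πℤ)`, the sum `|sin x| + |sin (α x)|` controls `|x - mπ|` and
`|α x - nπ|`, hence also `π |m α - n|`. As `α` is irrational and not Liouville,
`|m α - n| ≥ c / |m| ^ N` for `m ≠ 0`, and `|m| ≤ 1 + |x|`; dividing by `|x|` costs one more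
power of `1 + |x|`. When `m = 0` we have `|x| ≤ π/2`, where `|sin x| / |x| ≥ 2/π`.
-/

open Real

theorem Irrational.exists_le_abs_pow_mul_abs_mul_sub {α : ℝ} (hirr : Irrational α)
    (hL : ¬ Liouville α) :
    ∃ c : ℝ, 0 < c ∧ ∃ N : ℕ, ∀ m n : ℤ, m ≠ 0 →
      c ≤ |(m : ℝ)| ^ N * |m * α - n| := by
  unfold Liouville at hL
  push Not at hL
  obtain ⟨N, hN⟩ := hL
  have hδ : 0 < |α - round α| := abs_pos.2 (sub_ne_zero.2 (hirr.ne_int _))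
  refine ⟨min |α - round α| 1, lt_min hδ one_pos, N, fun m n hm => ?_⟩
  wlog hm_pos : 0 < m generalizing m n
  · have h := this (-m) (-n) (neg_ne_zero.2 hm) (by omega)
    rwa [show ((-m : ℤ) : ℝ) * α - ((-n : ℤ) : ℝ) = -(m * α - n) by push_cast; ring,
      abs_neg, Int.cast_neg, abs_neg] at h
  rcases (show m = 1 ∨ 1 < m by omega) with rfl | hm_gt
  · simpa using (min_le_left _ _).trans (round_le α n)
  · have hmR : (1 : ℝ) ≤ m := by exact_mod_cast hm_gt.le
    have hrat : α ≠ n / m := fun h => hirr.ne_rat (n / m) (by push_cast; exact h)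
    have hq : 1 ≤ (m : ℝ) ^ N * |α - n / m| := by
      rw [← div_le_iff₀' (by positivity)]
      exact hN n m hm_gt hrat
    have e : (m : ℝ) * α - n = m * (α - n / m) := by field_simp
    rw [e, abs_mul, abs_of_pos (by linarith : (0 : ℝ) < m)]
    calc min |α - round α| 1 ≤ 1 := min_le_right _ _
      _ ≤ (m : ℝ) ^ N * |α - n / m| := hq
      _ ≤ (m : ℝ) ^ N * (m * |α - n / m|) := by
          gcongr; exact le_mul_of_one_le_left (abs_nonneg _) hmR

theorem two_div_pi_mul_abs_sub_round_le_abs_sin (x : ℝ) :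
    2 / π * |x - round (x / π) * π| ≤ |sin x| := by
  have e : x - round (x / π) * π = (x / π - round (x / π)) * π := by field_simp
  have hx : |x - round (x / π) * π| ≤ π / 2 := by
    rw [e, abs_mul, abs_of_pos pi_pos]
    linarith [mul_le_mul_of_nonneg_right (abs_sub_round (x / π)) pi_pos.le]
  simpa [sin_sub_int_mul_pi, abs_mul, abs_neg_one_zpow] using mul_abs_le_abs_sin hx

theorem abs_round_div_pi_le (x : ℝ) : |(round (x / π) : ℝ)| ≤ 1 + |x| := by
  have h1 : |x / π| ≤ |x| := by
    rw [abs_div, abs_of_pos pi_pos]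
    exact div_le_self (abs_nonneg x) (by linarith [pi_gt_three])
  linarith [abs_sub_round (x / π), abs_sub_abs_le_abs_sub (round (x / π) : ℝ) (x / π),
    abs_sub_comm (round (x / π) : ℝ) (x / π)]

theorem two_mul_abs_round_mul_sub_round_le (α x : ℝ) :
    2 * |(round (x / π) : ℝ) * α - round (α * x / π)| ≤
      (1 + |α|) * (|sin x| + |sin (α * x)|) := by
  set m : ℝ := (round (x / π) : ℝ)
  set n : ℝ := (round (α * x / π) : ℝ)
  have hx := two_div_pi_mul_abs_sub_round_le_abs_sin x
  have hαx := two_div_pi_mul_abs_sub_round_le_abs_sin (α * x)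
  have htri : π * |m * α - n| ≤ |α| * |x - m * π| + |α * x - n * π| := by
    calc π * |m * α - n| = |(m * α - n) * π| := by rw [abs_mul, abs_of_pos pi_pos, mul_comm]
      _ = |α * (m * π - x) + (α * x - n * π)| := by ring_nf
      _ ≤ |α * (m * π - x)| + |α * x - n * π| := abs_add_le _ _
      _ = |α| * |x - m * π| + |α * x - n * π| := by rw [abs_mul, abs_sub_comm]
  calc 2 * |m * α - n| = 2 / π * (π * |m * α - n|) := by field_simp
    _ ≤ 2 / π * (|α| * |x - m * π| + |α * x - n * π|) := by gcongr
    _ = |α| * (2 / π * |x - m * π|) + 2 / π * |α * x - n * π| := by ring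
    _ ≤ |α| * |sin x| + |sin (α * x)| := by gcongr
    _ ≤ (1 + |α|) * (|sin x| + |sin (α * x)|) := by
          nlinarith [abs_nonneg α, abs_nonneg (sin x), abs_nonneg (sin (α * x))]

theorem Irrational.exists_le_pow_mul_abs_sin_add_abs_sin {α : ℝ} (hirr : Irrational α)
    (hL : ¬ Liouville α) :
    ∃ c : ℝ, 0 < c ∧ ∃ N : ℕ, ∀ x : ℝ, round (x / π) ≠ 0 →
      c ≤ (1 + |x|) ^ N * (|sin x| + |sin (α * x)|) := by
  obtain ⟨c, hc, N, hdioph⟩ := hirr.exists_le_abs_pow_mul_abs_mul_sub hL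
  refine ⟨2 * c / (1 + |α|), by positivity, N, fun x hm => ?_⟩
  rw [div_le_iff₀ (by positivity)]
  calc 2 * c
        ≤ |(round (x / π) : ℝ)| ^ N * (2 * |round (x / π) * α - round (α * x / π)|) := by
        linarith [hdioph _ (round (α * x / π)) hm]
    _ ≤ (1 + |x|) ^ N * ((1 + |α|) * (|sin x| + |sin (α * x)|)) :=
        mul_le_mul (pow_le_pow_left₀ (abs_nonneg _) (abs_round_div_pi_le x) N)
          (two_mul_abs_round_mul_sub_round_le α x) (by positivity) (by positivity)
    _ = (1 + |x|) ^ N * (|sin x| + |sin (α * x)|) * (1 + |α|) := by ring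

/-- If α is irrational and not Liouville, then there are C > 0 and a positive
integer N such that |sin x|/|x| + |sin(α x)|/|x| ≥ C(1+|x|)^(−N) for all real x,
the left side being interpreted as 1 + |α| at x = 0. -/
theorem stmt6 {α : ℝ} (hirr : Irrational α) (hL : ¬ Liouville α) :
    ∃ C : ℝ, 0 < C ∧ ∃ N : ℕ, 0 < N ∧ ∀ x : ℝ,
      (if x = 0 then 1 + |α|
        else |Real.sin x| / |x| + |Real.sin (α * x)| / |x|) ≥
        C * (1 + |x|) ^ (-(N : ℤ)) := by
  obtain ⟨c, hc, N, hsin⟩ := hirr.exists_le_pow_mul_abs_sin_add_abs_sin hL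
  set C := min c (2 / π)
  refine ⟨C, by positivity, N + 1, N.succ_pos, fun x => ?_⟩
  rw [ge_iff_le, zpow_neg, zpow_natCast, ← div_eq_mul_inv]
  have hpow : 1 ≤ (1 + |x|) ^ (N + 1) := one_le_pow₀ (by linarith [abs_nonneg x])
  have hC_le : C / (1 + |x|) ^ (N + 1) ≤ 2 / π :=
    (div_le_self (by positivity) hpow).trans (min_le_right _ _)
  split_ifs with hx
  · linarith [abs_nonneg α, (div_le_one pi_pos).2 (by linarith [pi_gt_three] : (2 : ℝ) ≤ π)]
  have hx0 : 0 < |x| := abs_pos.2 hx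
  rw [← add_div]
  by_cases hm : round (x / π) = 0
  · have hsin_x := two_div_pi_mul_abs_sub_round_le_abs_sin x
    rw [hm, Int.cast_zero, zero_mul, sub_zero] at hsin_x
    calc C / (1 + |x|) ^ (N + 1) ≤ 2 / π := hC_le
      _ ≤ |sin x| / |x| := (le_div_iff₀ hx0).2 hsin_x
      _ ≤ (|sin x| + |sin (α * x)|) / |x| := by
          gcongr; exact le_add_of_nonneg_right (abs_nonneg _)
  calc C / (1 + |x|) ^ (N + 1)
        ≤ (1 + |x|) ^ N * (|sin x| + |sin (α * x)|) / (1 + |x|) ^ (N + 1) := by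
        gcongr; exact (min_le_left _ _).trans (hsin x hm)
    _ = (|sin x| + |sin (α * x)|) / (1 + |x|) := by field_simp; ring
    _ ≤ (|sin x| + |sin (α * x)|) / |x| := by gcongr; linarith
end

section
/- Suppose α is an irrational real number that is not a Liouville number. Then there exist a constant C > 0 and a positive integer N such that for all real x with |x| > 2π, |sin x| + |sin(α x)| ≥ C·(1+|x|)^(−(N−1)). -/
/-!
Let `m` and `n` be the integers nearest to `x / π` and `α x / π`. Jordan's inequality bounds
`|x - m π|` and `|α x - n π|` by twice `|sin x|` and `|sin (α x)|`, and these two distances control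
`π |m α - n| ≤ |α| |x - m π| + |α x - n π|`. Since `α` is irrational and not Liouville,
`|m α - n| ≥ |m| ^ (-k)` for some fixed `k`, while `|x| > 2π` forces `2 ≤ |m| ≤ 1 + |x|`.
-/

open Real

theorem Irrational.exists_inv_pow_le_abs_mul_sub {α : ℝ} (hirr : Irrational α)
    (hL : ¬ Liouville α) :
    ∃ k : ℕ, ∀ p q : ℤ, 1 < |q| → (|(q : ℝ)| ^ k)⁻¹ ≤ |q * α - p| := by
  simp only [Liouville, not_forall, not_exists, not_and, not_lt] at hL
  obtain ⟨k, hk⟩ := hL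
  have of_one_lt : ∀ p q : ℤ, 1 < q → (|(q : ℝ)| ^ k)⁻¹ ≤ |q * α - p| := by
    intro p q hq
    have hq' : (1 : ℝ) < q := by exact_mod_cast hq
    have hq₀ : (0 : ℝ) < q := zero_lt_one.trans hq'
    have hne : α ≠ p / q := (irrational_iff_ne_rational α).mp hirr p q (by omega)
    calc (|(q : ℝ)| ^ k)⁻¹ = 1 / (q : ℝ) ^ k := by rw [abs_of_pos hq₀, one_div]
      _ ≤ |α - p / q| := hk p q hq hne
      _ ≤ q * |α - p / q| := le_mul_of_one_le_left (abs_nonneg _) hq'.le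
      _ = |q * α - p| := by
        rw [show (q : ℝ) * α - p = q * (α - p / q) by field_simp, abs_mul, abs_of_pos hq₀]
  refine ⟨k, fun p q hq => ?_⟩
  rcases lt_or_gt_of_ne (show q ≠ 0 by rintro rfl; simp at hq) with hneg | hpos
  · calc (|(q : ℝ)| ^ k)⁻¹ = (|((-q : ℤ) : ℝ)| ^ k)⁻¹ := by rw [Int.cast_neg, abs_neg]
      _ ≤ |((-q : ℤ) : ℝ) * α - ((-p : ℤ) : ℝ)| :=
          of_one_lt (-p) (-q) (by rwa [abs_of_neg hneg] at hq)
      _ = |q * α - p| := by rw [← abs_neg]; push_cast; ring_nf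
  · exact of_one_lt p q (by rwa [abs_of_pos hpos] at hq)

namespace Real

theorem abs_sub_round_div_pi_mul_pi_le (t : ℝ) : |t - round (t / π) * π| ≤ π / 2 := by
  have h := abs_sub_round (t / π)
  calc |t - round (t / π) * π| = |t / π - round (t / π)| * π := by
        rw [show t - round (t / π) * π = (t / π - round (t / π)) * π by field_simp, abs_mul,
          abs_of_pos pi_pos]
    _ ≤ 1 / 2 * π := by gcongr
    _ = π / 2 := by ring

theorem abs_sub_round_div_pi_mul_pi_le_two_mul_abs_sin (t : ℝ) :
    |t - round (t / π) * π| ≤ 2 * |sin t| := by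
  set m := round (t / π)
  have jordan := mul_abs_le_abs_sin (abs_sub_round_div_pi_mul_pi_le t)
  rw [sin_sub_int_mul_pi, abs_mul, abs_neg_one_zpow, one_mul] at jordan
  have : (1 : ℝ) / 2 ≤ 2 / π := by
    rw [le_div_iff₀ pi_pos]
    linarith [pi_le_four]
  have := mul_le_mul_of_nonneg_right this (abs_nonneg (t - m * π))
  linarith

theorem one_lt_abs_round_div_pi {x : ℝ} (hx : 2 * π < |x|) : 1 < |round (x / π)| := by
  by_contra! h
  have hm : |(round (x / π) : ℝ)| ≤ 1 := by exact_mod_cast h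
  have h_near := abs_sub_round_div_pi_mul_pi_le x
  have := abs_sub_abs_le_abs_sub x (round (x / π) * π)
  rw [abs_mul, abs_of_pos pi_pos] at this
  nlinarith [pi_pos]

theorem abs_round_div_pi_le_one_add_abs (x : ℝ) : |(round (x / π) : ℝ)| ≤ 1 + |x| := by
  have h_near := abs_sub_round_div_pi_mul_pi_le x
  have := abs_sub_abs_le_abs_sub (round (x / π) * π) x
  rw [abs_mul, abs_of_pos pi_pos, abs_sub_comm] at this
  nlinarith [pi_gt_three, abs_nonneg x]

end Real

theorem pi_mul_abs_mul_sub_le (α x : ℝ) (m n : ℤ) :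
    π * |m * α - n| ≤ |α| * |x - m * π| + |α * x - n * π| :=
  calc π * |m * α - n| = |α * (m * π - x) + (α * x - n * π)| := by
        rw [show α * (m * π - x) + (α * x - n * π) = π * (m * α - n) by ring, abs_mul,
          abs_of_pos pi_pos]
    _ ≤ |α| * |x - m * π| + |α * x - n * π| := by
        rw [abs_sub_comm x, ← abs_mul]
        exact abs_add_le _ _

/-- If α is irrational and not Liouville, then there are C > 0 and a positive
integer N with |sin x| + |sin(α x)| ≥ C(1+|x|)^(−(N−1)) for all |x| > 2π. -/
theorem stmt7 {α : ℝ} (hirr : Irrational α) (hL : ¬ Liouville α) :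
    ∃ C : ℝ, 0 < C ∧ ∃ N : ℕ, 0 < N ∧ ∀ x : ℝ, |x| > 2 * Real.pi →
      |Real.sin x| + |Real.sin (α * x)| ≥ C * (1 + |x|) ^ (-((N : ℤ) - 1)) := by
  obtain ⟨k, hk⟩ := hirr.exists_inv_pow_le_abs_mul_sub hL
  refine ⟨π / (2 * (|α| + 1)), by positivity, k + 1, k.succ_pos, fun x hx => ?_⟩
  set m := round (x / π)
  set n := round (α * x / π)
  have h_dioph : ((1 + |x|) ^ k)⁻¹ ≤ |m * α - n| :=
    calc ((1 + |x|) ^ k)⁻¹ ≤ (|(m : ℝ)| ^ k)⁻¹ := by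
          have hm : (1 : ℝ) < |(m : ℝ)| := by exact_mod_cast one_lt_abs_round_div_pi hx
          gcongr
          exact abs_round_div_pi_le_one_add_abs x
      _ ≤ |m * α - n| := hk n m (one_lt_abs_round_div_pi hx)
  have h_sin : π * |m * α - n| ≤ 2 * (|α| + 1) * (|sin x| + |sin (α * x)|) := by
    have h₁ := abs_sub_round_div_pi_mul_pi_le_two_mul_abs_sin x
    have h₂ := abs_sub_round_div_pi_mul_pi_le_two_mul_abs_sin (α * x)
    have := pi_mul_abs_mul_sub_le α x m n
    have : |α| * |x - m * π| ≤ (|α| + 1) * |x - m * π| := by gcongr; linarith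
    nlinarith [abs_nonneg α, abs_nonneg (sin x), abs_nonneg (sin (α * x))]
  have h_exp : -(((k + 1 : ℕ) : ℤ) - 1) = -(k : ℤ) := by push_cast; ring
  rw [h_exp, zpow_neg, zpow_natCast, ge_iff_le, div_mul_eq_mul_div, div_le_iff₀ (by positivity)]
  calc π * ((1 + |x|) ^ k)⁻¹ ≤ π * |m * α - n| := by gcongr
    _ ≤ _ := by linarith
end

section
/- Let α be irrational and not a Liouville number. Then there exist a constant C₁ > 0 and a positive integer N such that for all complex z, |sin z| + |sin(α z)| ≥ C₁·|z|·(1+|z|)^(−N). -/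
/-!
Write `‖x‖_ℤ` for the distance from `x` to the nearest integer. On the real line
`|sin x| ≥ 2 ‖x / π‖_ℤ`, and if `p` and `q` are the integers nearest to `t` and `α t`, then
`|p α - q| ≤ (1 + |α|) (‖t‖_ℤ + ‖α t‖_ℤ)` and `|p| ≤ 1 + |t|`. As `α` is irrational and
not Liouville, `|p α - q| ≥ c / |p| ^ n` whenever `p ≠ 0`, which gives a polynomial lower
bound for `|sin x| + |sin (α x)|` on the real line. For `z = x + i y` one has
`‖sin z‖² = sin² x + sinh² y`, so `‖sin z‖` dominates both `|sin x|` and `|y|`, and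
`‖z‖ ≤ |x| + |y|`.
-/

open Real

theorem Real.two_mul_abs_sub_round_le_abs_sin (x : ℝ) :
    2 * |x / π - round (x / π)| ≤ |sin x| := by
  set k := round (x / π)
  have hdist : x - k * π = (x / π - k) * π := by field_simp
  have hk : |x - k * π| ≤ π / 2 := by
    rw [hdist, abs_mul, abs_of_pos pi_pos]
    nlinarith [abs_sub_round (x / π), pi_pos]
  have hsin : |sin (x - k * π)| = |sin x| := by
    rw [sin_sub_int_mul_pi, abs_mul, abs_zpow, abs_neg, abs_one, one_zpow, one_mul]
  calc 2 * |x / π - k| = 2 / π * |x - k * π| := by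
        rw [hdist, abs_mul, abs_of_pos pi_pos]; field_simp
    _ ≤ |sin x| := hsin ▸ mul_abs_le_abs_sin hk

namespace Irrational

variable {α : ℝ}

theorem exists_pos_le_abs_sub_div_of_not_liouville (hirr : Irrational α) (hL : ¬ Liouville α) :
    ∃ c > 0, ∃ n : ℕ, ∀ a b : ℤ, 0 < b → c / (b : ℝ) ^ n ≤ |α - a / b| := by
  simp only [Liouville, not_forall, not_exists, not_and, not_lt] at hL
  obtain ⟨n, hn⟩ := hL
  have hδ : 0 < |α - round α| := abs_pos.2 (sub_ne_zero.2 (hirr.ne_int _))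
  refine ⟨min |α - round α| 1, lt_min hδ one_pos, n, fun a b hb => ?_⟩
  obtain rfl | hb1 := (show 1 ≤ b by omega).eq_or_lt
  · simpa using (min_le_left _ _).trans (round_le α a)
  · have hne : α ≠ a / b := by exact_mod_cast hirr.ne_rat (a / b)
    have hbpos : (0 : ℝ) < b := by exact_mod_cast hb
    calc min |α - round α| 1 / (b : ℝ) ^ n ≤ 1 / (b : ℝ) ^ n := by
          gcongr; exact min_le_right _ _
      _ ≤ |α - a / b| := hn a b hb1 hne

theorem exists_pos_le_abs_mul_sub_of_not_liouville (hirr : Irrational α) (hL : ¬ Liouville α) :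
    ∃ c > 0, ∃ n : ℕ, ∀ p q : ℤ, p ≠ 0 → c / |(p : ℝ)| ^ n ≤ |p * α - q| := by
  obtain ⟨c, hc, n, h⟩ := hirr.exists_pos_le_abs_sub_div_of_not_liouville hL
  refine ⟨c, hc, n, fun p q hp => ?_⟩
  have hp' : (p : ℝ) ≠ 0 := by exact_mod_cast hp
  have hquot : c / |(p : ℝ)| ^ n ≤ |α - q / p| := by
    rcases hp.lt_or_gt with hneg | hpos
    · simpa [abs_of_neg (show (p : ℝ) < 0 by exact_mod_cast hneg), neg_div_neg_eq]
        using h (-q) (-p) (by omega)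
    · simpa [abs_of_pos (show (0 : ℝ) < p by exact_mod_cast hpos)] using h q p hpos
  calc c / |(p : ℝ)| ^ n ≤ |α - q / p| := hquot
    _ ≤ |(p : ℝ)| * |α - q / p| :=
      le_mul_of_one_le_left (abs_nonneg _) (by exact_mod_cast Int.one_le_abs hp)
    _ = |p * α - q| := by rw [← abs_mul, mul_sub, mul_div_cancel₀ _ hp']

theorem exists_pos_mul_abs_le_abs_sub_round_add_of_not_liouville (hirr : Irrational α)
    (hL : ¬ Liouville α) : ∃ c > 0, ∃ n : ℕ, ∀ t : ℝ,
      c * |t| ≤ (|t - round t| + |α * t - round (α * t)|) * (1 + |t|) ^ (n + 1) := by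
  obtain ⟨c₀, hc₀, n, hB⟩ := hirr.exists_pos_le_abs_mul_sub_of_not_liouville hL
  refine ⟨min 1 (c₀ / (1 + |α|)), by positivity, n, fun t => ?_⟩
  set p := round t
  set q := round (α * t)
  set D := |t - p| + |α * t - q|
  have hD : 0 ≤ D := by positivity
  have ht : 1 ≤ 1 + |t| := le_add_of_nonneg_right (abs_nonneg t)
  by_cases hp : p = 0
  · have htD : |t| ≤ D := by simp [D, hp]
    calc min 1 (c₀ / (1 + |α|)) * |t| ≤ 1 * D :=
          mul_le_mul (min_le_left _ _) htD (abs_nonneg _) zero_le_one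
      _ ≤ D * (1 + |t|) ^ (n + 1) := by
          rw [one_mul]; exact le_mul_of_one_le_right hD (one_le_pow₀ ht)
  · have hpt : |(p : ℝ)| ≤ 1 + |t| := by
      have hround := abs_sub_round t
      have htri := abs_sub_abs_le_abs_sub (p : ℝ) t
      rw [abs_sub_comm] at htri
      linarith
    have hpq : |p * α - q| ≤ (1 + |α|) * D := by
      calc |p * α - q| = |α * (p - t) + (α * t - q)| := by ring_nf
        _ ≤ |α| * |t - p| + |α * t - q| := by
          rw [abs_sub_comm t, ← abs_mul]; exact abs_add_le _ _
        _ ≤ (1 + |α|) * D := by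
          nlinarith [abs_nonneg α, abs_nonneg (t - p), abs_nonneg (α * t - q)]
    have hc₀D : c₀ ≤ (1 + |α|) * (D * (1 + |t|) ^ n) :=
      calc c₀ ≤ |p * α - q| * |(p : ℝ)| ^ n :=
            (div_le_iff₀ (pow_pos (abs_pos.2 (Int.cast_ne_zero.2 hp)) n)).1 (hB p q hp)
        _ ≤ (1 + |α|) * D * (1 + |t|) ^ n := by gcongr
        _ = (1 + |α|) * (D * (1 + |t|) ^ n) := by ring
    calc min 1 (c₀ / (1 + |α|)) * |t| ≤ c₀ / (1 + |α|) * (1 + |t|) :=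
          mul_le_mul (min_le_right _ _) (by linarith) (abs_nonneg _) (by positivity)
      _ ≤ D * (1 + |t|) ^ n * (1 + |t|) := by
          gcongr; exact (div_le_iff₀' (by positivity)).2 hc₀D
      _ = D * (1 + |t|) ^ (n + 1) := by ring

theorem exists_pos_mul_abs_le_abs_sin_add_of_not_liouville (hirr : Irrational α)
    (hL : ¬ Liouville α) : ∃ C > 0, ∃ N : ℕ, 0 < N ∧ ∀ x : ℝ,
      C * |x| ≤ (|sin x| + |sin (α * x)|) * (1 + |x|) ^ N := by
  obtain ⟨c, hc, n, h⟩ := hirr.exists_pos_mul_abs_le_abs_sub_round_add_of_not_liouville hL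
  refine ⟨2 * c / π, by positivity, n + 1, n.succ_pos, fun x => ?_⟩
  have hsin := two_mul_abs_sub_round_le_abs_sin x
  have hsinα := two_mul_abs_sub_round_le_abs_sin (α * x)
  rw [mul_div_assoc] at hsinα
  have hxπ : |x / π| ≤ |x| := by
    rw [abs_div, abs_of_pos pi_pos]
    exact div_le_self (abs_nonneg x) (by linarith [pi_gt_three])
  calc 2 * c / π * |x| = 2 * (c * |x / π|) := by
        rw [abs_div, abs_of_pos pi_pos]; ring
    _ ≤ 2 * ((|x / π - round (x / π)| + |α * (x / π) - round (α * (x / π))|)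
          * (1 + |x / π|) ^ (n + 1)) := mul_le_mul_of_nonneg_left (h _) zero_le_two
    _ ≤ 2 * ((|x / π - round (x / π)| + |α * (x / π) - round (α * (x / π))|)
          * (1 + |x|) ^ (n + 1)) := by gcongr
    _ ≤ (|sin x| + |sin (α * x)|) * (1 + |x|) ^ (n + 1) := by
        rw [← mul_assoc]; gcongr; linarith

end Irrational

namespace Complex

theorem sq_norm_sin (z : ℂ) : ‖sin z‖ ^ 2 = Real.sin z.re ^ 2 + Real.sinh z.im ^ 2 := by
  have h : sin z = (Real.sin z.re * Real.cosh z.im : ℝ)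
      + (Real.cos z.re * Real.sinh z.im : ℝ) * I := by
    conv_lhs => rw [← re_add_im z]
    rw [sin_add, sin_mul_I, cos_mul_I]
    push_cast
    ring
  rw [h, Complex.sq_norm, normSq_add_mul_I]
  linear_combination Real.sinh z.im ^ 2 * Real.sin_sq_add_cos_sq z.re
    + Real.sin z.re ^ 2 * Real.cosh_sq z.im

theorem abs_sin_re_le_norm_sin (z : ℂ) : |Real.sin z.re| ≤ ‖sin z‖ := by
  refine (sq_le_sq.1 ?_).trans_eq (abs_norm _)
  rw [sq_norm_sin]
  exact le_add_of_nonneg_right (sq_nonneg _)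

theorem abs_im_le_norm_sin (z : ℂ) : |z.im| ≤ ‖sin z‖ := by
  have hsinh : |z.im| ≤ |Real.sinh z.im| := by
    rw [Real.abs_sinh]; exact Real.self_le_sinh_iff.2 (abs_nonneg _)
  refine hsinh.trans ?_
  refine (sq_le_sq.1 ?_).trans_eq (abs_norm _)
  rw [sq_norm_sin]
  exact le_add_of_nonneg_left (sq_nonneg _)

theorem mul_norm_le_norm_sin_add_norm_sin_mul {α C : ℝ} {N : ℕ} (hC : 0 ≤ C)
    (hreal : ∀ x : ℝ, C * |x| ≤ (|Real.sin x| + |Real.sin (α * x)|) * (1 + |x|) ^ N)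
    (z : ℂ) :
    min C 1 / 2 * ‖z‖ ≤ (‖sin z‖ + ‖sin (α * z)‖) * (1 + ‖z‖) ^ N := by
  set S := ‖sin z‖ + ‖sin (α * z)‖
  have hS : ‖sin z‖ ≤ S := le_add_of_nonneg_right (norm_nonneg _)
  have hE : 1 ≤ (1 + ‖z‖) ^ N := one_le_pow₀ (le_add_of_nonneg_right (norm_nonneg z))
  have hre : C * |z.re| ≤ S * (1 + ‖z‖) ^ N := by
    have hαre : (α * z : ℂ).re = α * z.re := by simp
    have hsinα := abs_sin_re_le_norm_sin (α * z)
    rw [hαre] at hsinα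
    refine (hreal z.re).trans (mul_le_mul (add_le_add (abs_sin_re_le_norm_sin z) hsinα)
      (pow_le_pow_left₀ (by positivity) ?_ N) (by positivity) (by positivity))
    linarith [abs_re_le_norm z]
  have him : |z.im| ≤ S * (1 + ‖z‖) ^ N :=
    (abs_im_le_norm_sin z).trans
      (hS.trans (le_mul_of_one_le_right ((norm_nonneg _).trans hS) hE))
  have hmin : 0 ≤ min C 1 := le_min hC zero_le_one
  calc min C 1 / 2 * ‖z‖ ≤ min C 1 / 2 * (|z.re| + |z.im|) := by
        gcongr; exact norm_le_abs_re_add_abs_im z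
    _ ≤ (C * |z.re| + |z.im|) / 2 := by
        nlinarith [min_le_left C 1, min_le_right C 1, abs_nonneg z.re, abs_nonneg z.im]
    _ ≤ S * (1 + ‖z‖) ^ N := by linarith

end Complex

/-- If α is irrational and not Liouville, there exist C₁ > 0 and a positive
integer N such that |sin z| + |sin(α z)| ≥ C₁ |z| (1+|z|)^(−N) for all z ∈ ℂ. -/
theorem stmt9 {α : ℝ} (hirr : Irrational α) (hL : ¬ Liouville α) :
    ∃ C₁ : ℝ, 0 < C₁ ∧ ∃ N : ℕ, 0 < N ∧ ∀ z : ℂ,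
      ‖Complex.sin z‖ + ‖Complex.sin ((α : ℂ) * z)‖ ≥
        C₁ * ‖z‖ * (1 + ‖z‖) ^ (-(N : ℤ)) := by
  obtain ⟨C, hC, N, hN, hreal⟩ := hirr.exists_pos_mul_abs_le_abs_sin_add_of_not_liouville hL
  refine ⟨min C 1 / 2, by positivity, N, hN, fun z => ?_⟩
  rw [zpow_neg, zpow_natCast, ← div_eq_mul_inv, ge_iff_le, div_le_iff₀ (by positivity)]
  exact Complex.mul_norm_le_norm_sin_add_norm_sin_mul hC.le hreal z
end

section
/- Let β = Σ_{j=1}^∞ 2^(−j!). Then β is a Liouville number, but β is not a Liouville number of odd type: there exists a constant (in fact exponent 3) such that for all sufficiently large odd integers q, the distance from qβ to the nearest integer exceeds q^(−3). -/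
/-!
Here `β = L - 1/2`, where `L = ∑ 2^(-i!)` is Liouville's constant, so `β` is a Liouville number.
For odd `q`, pick `k` with `2^(k!) ≤ q² < 2^((k+1)!)`. The partial sum of `β` up to `2^(-k!)` is
`N / 2^(k!)` with `N` odd, so `q N / 2^(k!) - n` has an odd numerator and is at least `2^(-k!)`
in absolute value. The tail contributes at most `2q · 2^(-(k+1)!)`, which the choice of `k` makes
smaller than `2^(-k!) / 2`; hence `|qβ - n| > 2^(-k!) / 2 ≥ 1 / (2q²) > q^(-3)`.
-/

open Nat LiouvilleNumber

theorem Liouville.sub_rat {x : ℝ} (hx : Liouville x) (r : ℚ) : Liouville (x - r) :=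
  forall_liouvilleWith_iff.mp fun p => (hx.liouvilleWith p).sub_rat r

theorem pow_factorial_succ {M : Type*} [Monoid M] (a : M) (k : ℕ) :
    a ^ (k + 1)! = (a ^ k !) ^ (k + 1) := by
  rw [factorial_succ, mul_comm, pow_mul]

theorem exists_two_pow_factorial_le_lt {x : ℕ} (hx : 4 ≤ x) :
    ∃ k, 2 ≤ k ∧ 2 ^ k ! ≤ x ∧ x < 2 ^ (k + 1)! := by
  classical
  have hex : ∃ k, x < 2 ^ (k + 1)! :=
    ⟨x, x.lt_two_pow_self.trans_le (Nat.pow_le_pow_right two_pos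
      ((self_le_factorial _).trans (factorial_le x.le_succ)))⟩
  have hk : 2 ≤ Nat.find hex := by
    by_contra! h
    have : 2 ^ (Nat.find hex + 1)! ≤ 4 := by interval_cases Nat.find hex <;> decide
    have := Nat.find_spec hex
    omega
  obtain ⟨k, hk'⟩ : ∃ k, Nat.find hex = k + 1 := ⟨Nat.find hex - 1, by omega⟩
  exact ⟨k + 1, hk'.symm ▸ hk, not_lt.mp (Nat.find_min hex (by omega)), hk' ▸ Nat.find_spec hex⟩

theorem one_div_two_pow_le_abs_odd_mul_div_sub {N q : ℤ} (hN : Odd N) (hq : Odd q) (n : ℤ)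
    {e : ℕ} (he : e ≠ 0) : (1 : ℝ) / 2 ^ e ≤ |(q : ℝ) * (N / 2 ^ e) - n| := by
  have hodd : Odd (q * N - n * 2 ^ e) :=
    (hq.mul hN).sub_even ((Int.even_pow.mpr ⟨even_two, he⟩).mul_left n)
  have hnum : (1 : ℝ) ≤ |((q * N - n * 2 ^ e : ℤ) : ℝ)| := by
    exact_mod_cast Int.one_le_abs fun h => Int.not_odd_zero (h ▸ hodd)
  have hfrac : (q : ℝ) * (N / 2 ^ e) - n = ((q * N - n * 2 ^ e : ℤ) : ℝ) / 2 ^ e := by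
    push_cast
    field_simp
  rw [hfrac, abs_div, abs_of_pos (by positivity : (0 : ℝ) < 2 ^ e)]
  exact div_le_div_of_nonneg_right hnum (by positivity)

theorem zpow_neg_three_lt_one_div_sub_of_le_sq {q A : ℝ} {k : ℕ} (hk : 2 ≤ k) (hq : 64 ≤ q)
    (hA1 : 1 ≤ A) (hA : A ≤ q ^ 2) (hqA : q ^ 2 < A ^ (k + 1)) :
    q ^ (-3 : ℤ) < 1 / A - q * (2 * (1 / A ^ (k + 1))) := by
  have hq4 : 4 * q < A ^ k := by
    refine lt_of_pow_lt_pow_left₀ 3 (by positivity) ?_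
    calc (4 * q) ^ 3 = 64 * q ^ 3 := by ring
      _ ≤ q * q ^ 3 := by gcongr
      _ = (q ^ 2) ^ 2 := by ring
      _ < (A ^ (k + 1)) ^ 2 := by gcongr
      _ ≤ (A ^ k) ^ 3 := by
        rw [← pow_mul, ← pow_mul]
        exact pow_le_pow_right₀ hA1 (by omega)
  have hA0 : 0 < A := by positivity
  have htail : q * (2 * (1 / A ^ (k + 1))) < 1 / (2 * A) := by
    rw [pow_succ, mul_one_div, mul_div_assoc', div_lt_div_iff₀ (by positivity) (by positivity)]
    nlinarith
  calc q ^ (-3 : ℤ) = 1 / q ^ 3 := by rw [zpow_neg, zpow_ofNat, one_div]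
    _ < 1 / (2 * q ^ 2) := by
      gcongr
      nlinarith
    _ ≤ 1 / (2 * A) := by gcongr
    _ = 1 / A - 1 / (2 * A) := by field_simp; ring
    _ < 1 / A - q * (2 * (1 / A ^ (k + 1))) := by linarith

theorem tsum_one_half_pow_factorial_succ :
    ∑' j : ℕ, ((1 : ℝ) / 2) ^ (j + 1)! = liouvilleNumber 2 - 1 / 2 := by
  rw [liouvilleNumber, (LiouvilleNumber.summable one_lt_two).tsum_eq_zero_add]
  simp only [one_div_pow, factorial_zero, pow_one]
  ring

theorem liouville_liouvilleNumber_two_sub_half : Liouville (liouvilleNumber 2 - 1 / 2) := by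
  simpa using (liouville_liouvilleNumber le_rfl).sub_rat (1 / 2)

theorem LiouvilleNumber.exists_odd_partialSum_two_sub_half {k : ℕ} (hk : 1 ≤ k) :
    ∃ N : ℤ, Odd N ∧ partialSum 2 k - 1 / 2 = N / 2 ^ k ! := by
  induction k, hk using Nat.le_induction with
  | base => exact ⟨1, odd_one, by norm_num [partialSum, Finset.sum_range_succ]⟩
  | succ k hk ih =>
    obtain ⟨N, hN, hsum⟩ := ih
    have hpos : k * k ! ≠ 0 := (Nat.mul_pos hk (factorial_pos k)).ne'
    refine ⟨N * 2 ^ (k * k !) + 1, (Int.even_pow.mpr ⟨even_two, hpos⟩).mul_left N |>.add_one, ?_⟩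
    rw [partialSum_succ, add_sub_right_comm, hsum, factorial_succ, add_mul, one_mul, add_comm,
      pow_add]
    push_cast
    field_simp
    ring

theorem LiouvilleNumber.le_abs_odd_mul_two_sub_half_sub {q : ℤ} (hq : Odd q) (hq0 : 0 ≤ q)
    (n : ℤ) {k : ℕ} (hk : 1 ≤ k) :
    (1 : ℝ) / 2 ^ (k !) - q * (2 * (1 / 2 ^ (k + 1)!)) ≤
      |q * (liouvilleNumber 2 - 1 / 2) - n| := by
  obtain ⟨N, hN, hpartial⟩ := exists_odd_partialSum_two_sub_half hk
  have hrem : remainder 2 k < 2 * (1 / 2 ^ (k + 1)!) := by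
    convert remainder_lt' k one_lt_two using 2
    norm_num
  have hsplit : (q : ℝ) * (liouvilleNumber 2 - 1 / 2) - n
      = (q * (N / 2 ^ k !) - n) + q * remainder 2 k := by
    rw [← partialSum_add_remainder one_lt_two, ← hpartial]
    ring
  have hq0' : (0 : ℝ) ≤ q := by exact_mod_cast hq0
  calc (1 : ℝ) / 2 ^ (k !) - q * (2 * (1 / 2 ^ (k + 1)!))
      ≤ |(q : ℝ) * (N / 2 ^ k !) - n| - |q * remainder 2 k| := by
        rw [abs_of_nonneg (mul_nonneg hq0' (remainder_pos one_lt_two k).le)]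
        gcongr
        exact one_div_two_pow_le_abs_odd_mul_div_sub hN hq n (factorial_ne_zero k)
    _ ≤ _ := hsplit ▸ abs_sub_abs_le_abs_add _ _

/-- β = Σ_{j≥1} 2^(−j!) is a Liouville number which is not of odd type: for all
sufficiently large odd integers q, the distance from qβ to the nearest integer
exceeds q^(−3). -/
theorem stmt16 (β : ℝ) (hβ : β = ∑' j : ℕ, ((1 : ℝ) / 2) ^ Nat.factorial (j + 1)) :
    Liouville β ∧ ∃ Q : ℤ, ∀ q : ℤ, Q ≤ q → Odd q →
      ∀ n : ℤ, (q : ℝ) ^ (-(3 : ℤ)) < |(q : ℝ) * β - n| := by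
  rw [tsum_one_half_pow_factorial_succ] at hβ
  subst hβ
  refine ⟨liouville_liouvilleNumber_two_sub_half, 64, fun q hq hodd n => ?_⟩
  lift q to ℕ using by omega
  obtain ⟨k, hk, hle, hlt⟩ := exists_two_pow_factorial_le_lt (x := q ^ 2) (by nlinarith)
  have hA : (2 : ℝ) ^ k ! ≤ (q : ℝ) ^ 2 := by exact_mod_cast hle
  have hqA : (q : ℝ) ^ 2 < ((2 : ℝ) ^ k !) ^ (k + 1) := by
    rw [← pow_factorial_succ]
    exact_mod_cast hlt
  have hlower := le_abs_odd_mul_two_sub_half_sub hodd (by omega) n (by omega : 1 ≤ k)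
  rw [pow_factorial_succ] at hlower
  push_cast at hlower ⊢
  exact (zpow_neg_three_lt_one_div_sub_of_le_sq hk (by exact_mod_cast hq)
    (one_le_pow₀ one_le_two) hA hqA).trans_le hlower
end
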